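/- Fix λ ∈ ℂ with λ ≠ 0, an open set U ⊆ ℂ, a smooth function φ : U → ℝ and a smooth function t : U → ℂ. Define P₁, Q₁ : U → M₂(ℂ) by P₁ = [[−(1/4)∂φ, −i·λ·t·e^{−φ/2}], [e^{φ/2}, (1/4)∂φ]] and Q₁ = [[(1/4)∂̄φ, e^{φ/2}], [i·λ⁻¹·t̄·e^{−φ/2}, −(1/4)∂̄φ]]. Then the zero-curvature equation ∂Q₁ − ∂̄P₁ + P₁Q₁ − Q₁P₁ = 0 holds everywhere on U if and only if t is holomorphic on U (∂̄t = 0 on U) and φ satisfies the sinh-Gordon equation (1/2)∂∂̄φ = e^φ − |t|²·e^{−φ} on U. -/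

import Mathlib

open Complex Matrix

/-- Wirtinger derivative ∂f(z) = (1/2)(Df(z)(1) − i·Df(z)(i)). -/
noncomputable def wD (f : ℂ → ℂ) (z : ℂ) : ℂ :=
  (1 / 2) * (fderiv ℝ f z 1 - Complex.I * fderiv ℝ f z Complex.I)

/-- Conjugate Wirtinger derivative ∂̄f(z) = (1/2)(Df(z)(1) + i·Df(z)(i)). -/
noncomputable def wDbar (f : ℂ → ℂ) (z : ℂ) : ℂ :=
  (1 / 2) * (fderiv ℝ f z 1 + Complex.I * fderiv ℝ f z Complex.I)

/-- Entrywise Wirtinger derivative of a matrix-valued function. -/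
noncomputable def mwD (F : ℂ → Matrix (Fin 2) (Fin 2) ℂ) (z : ℂ) : Matrix (Fin 2) (Fin 2) ℂ :=
  Matrix.of fun i j => wD (fun w => F w i j) z

/-- Entrywise conjugate Wirtinger derivative of a matrix-valued function. -/
noncomputable def mwDbar (F : ℂ → Matrix (Fin 2) (Fin 2) ℂ) (z : ℂ) : Matrix (Fin 2) (Fin 2) ℂ :=
  Matrix.of fun i j => wDbar (fun w => F w i j) z

/-- The `dz`-coefficient P₁(λ) of the sinh-Gordon connection. -/
noncomputable def sinhP (lam : ℂ) (φ : ℂ → ℝ) (t : ℂ → ℂ) (z : ℂ) : Matrix (Fin 2) (Fin 2) ℂ :=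
  !![-(1 / 4) * wD (fun w => (φ w : ℂ)) z, -Complex.I * lam * t z * (Real.exp (-φ z / 2) : ℝ);
     ((Real.exp (φ z / 2) : ℝ) : ℂ), (1 / 4) * wD (fun w => (φ w : ℂ)) z]

/-- The `dz̄`-coefficient Q₁(λ) of the sinh-Gordon connection. -/
noncomputable def sinhQ (lam : ℂ) (φ : ℂ → ℝ) (t : ℂ → ℂ) (z : ℂ) : Matrix (Fin 2) (Fin 2) ℂ :=
  !![(1 / 4) * wDbar (fun w => (φ w : ℂ)) z, ((Real.exp (φ z / 2) : ℝ) : ℂ);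
     Complex.I * lam⁻¹ * (starRingEnd ℂ) (t z) * (Real.exp (-φ z / 2) : ℝ),
       -(1 / 4) * wDbar (fun w => (φ w : ℂ)) z]

section toolkit

variable {f g : ℂ → ℂ} {z : ℂ} {c : ℂ}

theorem wD_const_mul (hf : DifferentiableAt ℝ f z) :
    wD (fun w => c * f w) z = c * wD f z := by
  simp [wD, fderiv_const_mul hf c]; ring

theorem wD_mul (hf : DifferentiableAt ℝ f z) (hg : DifferentiableAt ℝ g z) :
    wD (fun w => f w * g w) z = wD f z * g z + f z * wD g z := by
  simp [wD, fderiv_fun_mul hf hg, smul_eq_mul]; ring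

theorem wDbar_const_mul (hf : DifferentiableAt ℝ f z) :
    wDbar (fun w => c * f w) z = c * wDbar f z := by
  simp [wDbar, fderiv_const_mul hf c]; ring

theorem wDbar_mul (hf : DifferentiableAt ℝ f z) (hg : DifferentiableAt ℝ g z) :
    wDbar (fun w => f w * g w) z = wDbar f z * g z + f z * wDbar g z := by
  simp [wDbar, fderiv_fun_mul hf hg, smul_eq_mul]; ring

theorem fderiv_conj_comp (hg : DifferentiableAt ℝ g z) (v : ℂ) :
    fderiv ℝ (fun w => (starRingEnd ℂ) (g w)) z v = (starRingEnd ℂ) (fderiv ℝ g z v) := by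
  have : (fun w => (starRingEnd ℂ) (g w)) = (Complex.conjCLE : ℂ →L[ℝ] ℂ) ∘ g := rfl
  rw [this, fderiv_comp z (ContinuousLinearMap.differentiableAt _) hg, ContinuousLinearMap.fderiv]
  simp [ContinuousLinearEquiv.fderiv]

theorem wD_conj (hg : DifferentiableAt ℝ g z) :
    wD (fun w => (starRingEnd ℂ) (g w)) z = (starRingEnd ℂ) (wDbar g z) := by
  simp only [wD, wDbar, fderiv_conj_comp hg, _root_.map_mul, _root_.map_add, _root_.map_sub,
    map_div₀, _root_.map_one, map_ofNat, Complex.conj_I]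
  ring

theorem fderiv_ofReal_comp {g : ℂ → ℝ} (hg : DifferentiableAt ℝ g z) (v : ℂ) :
    fderiv ℝ (fun w => ((g w : ℝ) : ℂ)) z v = ((fderiv ℝ g z v : ℝ) : ℂ) := by
  have : (fun w => ((g w : ℝ) : ℂ)) = Complex.ofRealCLM ∘ g := rfl
  rw [this, fderiv_comp z (ContinuousLinearMap.differentiableAt _) hg]
  simp

theorem fderiv_exp_ofReal_comp {g : ℂ → ℝ} (hg : DifferentiableAt ℝ g z) (v : ℂ) :
    fderiv ℝ (fun w => ((Real.exp (g w) : ℝ) : ℂ)) z v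
      = (Real.exp (g z) : ℂ) * ((fderiv ℝ g z v : ℝ) : ℂ) := by
  have hexp : DifferentiableAt ℝ (fun w => Real.exp (g w)) z := hg.exp
  rw [fderiv_ofReal_comp hexp v]
  have : fderiv ℝ (fun w => Real.exp (g w)) z = Real.exp (g z) • fderiv ℝ g z :=
    ((Real.hasDerivAt_exp (g z)).comp_hasFDerivAt z hg.hasFDerivAt).fderiv
  rw [this]
  push_cast
  simp [smul_eq_mul]

theorem wD_exp_ofReal {g : ℂ → ℝ} (hg : DifferentiableAt ℝ g z) :
    wD (fun w => ((Real.exp (g w) : ℝ) : ℂ)) z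
      = (Real.exp (g z) : ℂ) * wD (fun w => ((g w : ℝ) : ℂ)) z := by
  simp only [wD, fderiv_exp_ofReal_comp hg, fderiv_ofReal_comp hg]; ring

theorem wDbar_exp_ofReal {g : ℂ → ℝ} (hg : DifferentiableAt ℝ g z) :
    wDbar (fun w => ((Real.exp (g w) : ℝ) : ℂ)) z
      = (Real.exp (g z) : ℂ) * wDbar (fun w => ((g w : ℝ) : ℂ)) z := by
  simp only [wDbar, fderiv_exp_ofReal_comp hg, fderiv_ofReal_comp hg]; ring

theorem diffAt_fderiv_apply (hf : ContDiffAt ℝ 2 f z) (v : ℂ) :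
    DifferentiableAt ℝ (fun w => fderiv ℝ f w v) z := by
  have h : ContDiffAt ℝ 1 (fderiv ℝ f) z := hf.fderiv_right (by norm_num)
  exact (ContinuousLinearMap.apply ℝ ℂ v).differentiable.differentiableAt.comp z
    (h.differentiableAt one_ne_zero)

theorem fderiv_fderiv_apply (hf : ContDiffAt ℝ 2 f z) (v u : ℂ) :
    fderiv ℝ (fun w => fderiv ℝ f w v) z u = fderiv ℝ (fderiv ℝ f) z u v := by
  have h : ContDiffAt ℝ 1 (fderiv ℝ f) z := hf.fderiv_right (by norm_num)
  have hd : DifferentiableAt ℝ (fderiv ℝ f) z := h.differentiableAt one_ne_zero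
  have : (fun w => fderiv ℝ f w v) = (ContinuousLinearMap.apply ℝ ℂ v) ∘ (fderiv ℝ f) := rfl
  rw [this, fderiv_comp z (ContinuousLinearMap.differentiableAt _) hd]
  simp

theorem differentiableAt_wD (hf : ContDiffAt ℝ 2 f z) : DifferentiableAt ℝ (wD f) z := by
  unfold wD
  exact ((diffAt_fderiv_apply hf 1).sub ((diffAt_fderiv_apply hf I).const_mul I)).const_mul _

theorem differentiableAt_wDbar (hf : ContDiffAt ℝ 2 f z) : DifferentiableAt ℝ (wDbar f) z := by
  unfold wDbar
  exact ((diffAt_fderiv_apply hf 1).add ((diffAt_fderiv_apply hf I).const_mul I)).const_mul _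

theorem wD_wDbar_comm (hf : ContDiffAt ℝ 2 f z) : wD (wDbar f) z = wDbar (wD f) z := by
  have hA := diffAt_fderiv_apply hf (1 : ℂ)
  have hB := diffAt_fderiv_apply hf (I : ℂ)
  have hsymm := hf.isSymmSndFDerivAt (by simp)
  have hDbar : ∀ v, fderiv ℝ (wDbar f) z v
      = (1/2) * (fderiv ℝ (fderiv ℝ f) z v 1 + I * fderiv ℝ (fderiv ℝ f) z v I) := by
    intro v
    have e : wDbar f = fun w => (1/2 : ℂ) * ((fun w => fderiv ℝ f w 1) w
        + Complex.I * (fun w => fderiv ℝ f w Complex.I) w) := rfl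
    rw [e, fderiv_const_mul (hA.fun_add (hB.const_mul I)), fderiv_fun_add hA (hB.const_mul I),
      fderiv_const_mul hB]
    simp [fderiv_fderiv_apply hf, smul_eq_mul]
    try ring
  have hD : ∀ v, fderiv ℝ (wD f) z v
      = (1/2) * (fderiv ℝ (fderiv ℝ f) z v 1 - I * fderiv ℝ (fderiv ℝ f) z v I) := by
    intro v
    have e : wD f = fun w => (1/2 : ℂ) * ((fun w => fderiv ℝ f w 1) w
        - Complex.I * (fun w => fderiv ℝ f w Complex.I) w) := rfl
    rw [e, fderiv_const_mul (hA.fun_sub (hB.const_mul I)), fderiv_fun_sub hA (hB.const_mul I),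
      fderiv_const_mul hB]
    simp [fderiv_fderiv_apply hf, smul_eq_mul]
    try ring
  show (1/2 : ℂ) * ((fderiv ℝ (wDbar f) z) 1 - I * (fderiv ℝ (wDbar f) z) I)
      = (1/2 : ℂ) * ((fderiv ℝ (wD f) z) 1 + I * (fderiv ℝ (wD f) z) I)
  rw [hDbar 1, hDbar I, hD 1, hD I, hsymm 1 I]
  ring

end toolkit

theorem sinh_key (lam : ℂ) (hlam : lam ≠ 0) (φ : ℂ → ℝ) (t : ℂ → ℂ) (z : ℂ)
    (hφz : ContDiffAt ℝ 2 φ z) (htz : DifferentiableAt ℝ t z) :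
    mwD (sinhQ lam φ t) z - mwDbar (sinhP lam φ t) z
        + sinhP lam φ t z * sinhQ lam φ t z - sinhQ lam φ t z * sinhP lam φ t z
      = !![(1/2) * wD (wDbar (fun w => (φ w : ℂ))) z
              + t z * (starRingEnd ℂ) (t z) * ((Real.exp (-φ z) : ℝ) : ℂ)
              - ((Real.exp (φ z) : ℝ) : ℂ),
           Complex.I * lam * ((Real.exp (-φ z / 2) : ℝ) : ℂ) * wDbar t z;
           Complex.I * lam⁻¹ * ((Real.exp (-φ z / 2) : ℝ) : ℂ) * (starRingEnd ℂ) (wDbar t z),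
           -((1/2) * wD (wDbar (fun w => (φ w : ℂ))) z
              + t z * (starRingEnd ℂ) (t z) * ((Real.exp (-φ z) : ℝ) : ℂ)
              - ((Real.exp (φ z) : ℝ) : ℂ))] := by
  set f : ℂ → ℂ := fun w => (φ w : ℂ) with hfdef
  have hφd : DifferentiableAt ℝ φ z := hφz.differentiableAt (by norm_num)
  have hf2 : ContDiffAt ℝ 2 f z :=
    (Complex.ofRealCLM.contDiff.contDiffAt).comp z hφz
  have hfd : DifferentiableAt ℝ f z := hf2.differentiableAt (by norm_num)
  have hwDf : DifferentiableAt ℝ (wD f) z := differentiableAt_wD hf2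
  have hwDbarf : DifferentiableAt ℝ (wDbar f) z := differentiableAt_wDbar hf2
  have hg1 : DifferentiableAt ℝ (fun w : ℂ => φ w / 2) z := by fun_prop
  have hg2 : DifferentiableAt ℝ (fun w : ℂ => -φ w / 2) z := by fun_prop
  have hE1 : DifferentiableAt ℝ (fun w : ℂ => Real.exp (φ w / 2)) z := by fun_prop
  have hE2 : DifferentiableAt ℝ (fun w : ℂ => Real.exp (-φ w / 2)) z := by fun_prop
  have hEd : DifferentiableAt ℝ (fun w => ((Real.exp (φ w / 2) : ℝ) : ℂ)) z := by
    have := Complex.ofRealCLM.differentiableAt.comp z hE1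
    exact this
  have hEmd : DifferentiableAt ℝ (fun w => ((Real.exp (-φ w / 2) : ℝ) : ℂ)) z := by
    have := Complex.ofRealCLM.differentiableAt.comp z hE2
    exact this
  have hconjt : DifferentiableAt ℝ (fun w => (starRingEnd ℂ) (t w)) z := by
    have := ((Complex.conjCLE : ℂ →L[ℝ] ℂ).differentiableAt).comp z htz
    exact this
  -- derivative of half-exponentials
  have ehalf : (fun w => ((φ w / 2 : ℝ) : ℂ)) = fun w => (1/2 : ℂ) * f w := by
    funext w; push_cast [hfdef]; try ring
  have emhalf : (fun w => ((-φ w / 2 : ℝ) : ℂ)) = fun w => (-(1/2) : ℂ) * f w := by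
    funext w; push_cast [hfdef]; try ring
  have vE : wD (fun w => ((Real.exp (φ w / 2) : ℝ) : ℂ)) z
      = (1/2) * ((Real.exp (φ z / 2) : ℝ) : ℂ) * wD f z := by
    rw [wD_exp_ofReal hg1, ehalf, wD_const_mul hfd]; try ring
  have vEm : wD (fun w => ((Real.exp (-φ w / 2) : ℝ) : ℂ)) z
      = -(1/2) * ((Real.exp (-φ z / 2) : ℝ) : ℂ) * wD f z := by
    rw [wD_exp_ofReal hg2, emhalf, wD_const_mul hfd]; try ring
  have vEbar : wDbar (fun w => ((Real.exp (φ w / 2) : ℝ) : ℂ)) z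
      = (1/2) * ((Real.exp (φ z / 2) : ℝ) : ℂ) * wDbar f z := by
    rw [wDbar_exp_ofReal hg1, ehalf, wDbar_const_mul hfd]; try ring
  have vEmbar : wDbar (fun w => ((Real.exp (-φ w / 2) : ℝ) : ℂ)) z
      = -(1/2) * ((Real.exp (-φ z / 2) : ℝ) : ℂ) * wDbar f z := by
    rw [wDbar_exp_ofReal hg2, emhalf, wDbar_const_mul hfd]; try ring
  -- entries of mwD (sinhQ)
  have q00 : wD (fun w => sinhQ lam φ t w 0 0) z = (1/4) * wD (wDbar f) z := by
    have e : (fun w => sinhQ lam φ t w 0 0) = fun w => (1/4 : ℂ) * wDbar f w := by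
      funext w; simp [sinhQ, hfdef]
    rw [e, wD_const_mul hwDbarf]
  have q01 : wD (fun w => sinhQ lam φ t w 0 1) z
      = (1/2) * ((Real.exp (φ z / 2) : ℝ) : ℂ) * wD f z := by
    have e : (fun w => sinhQ lam φ t w 0 1)
        = fun w => ((Real.exp (φ w / 2) : ℝ) : ℂ) := by
      funext w; simp [sinhQ]
    rw [e, vE]
  have q10 : wD (fun w => sinhQ lam φ t w 1 0) z
      = Complex.I * lam⁻¹ * ((starRingEnd ℂ) (wDbar t z) * ((Real.exp (-φ z / 2) : ℝ) : ℂ)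
          + (starRingEnd ℂ) (t z) * (-(1/2) * ((Real.exp (-φ z / 2) : ℝ) : ℂ) * wD f z)) := by
    have e : (fun w => sinhQ lam φ t w 1 0)
        = fun w => (Complex.I * lam⁻¹)
            * ((fun w => (starRingEnd ℂ) (t w)) w
                * (fun w => ((Real.exp (-φ w / 2) : ℝ) : ℂ)) w) := by
      funext w; simp [sinhQ]; try ring
    rw [e, wD_const_mul (hconjt.fun_mul hEmd), wD_mul hconjt hEmd, wD_conj htz, vEm]
  have q11 : wD (fun w => sinhQ lam φ t w 1 1) z = -(1/4) * wD (wDbar f) z := by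
    have e : (fun w => sinhQ lam φ t w 1 1) = fun w => (-(1/4) : ℂ) * wDbar f w := by
      funext w; simp [sinhQ, hfdef]; try ring
    rw [e, wD_const_mul hwDbarf]; try ring
  -- entries of mwDbar (sinhP)
  have p00 : wDbar (fun w => sinhP lam φ t w 0 0) z = -(1/4) * wDbar (wD f) z := by
    have e : (fun w => sinhP lam φ t w 0 0) = fun w => (-(1/4) : ℂ) * wD f w := by
      funext w; simp [sinhP, hfdef]; try ring
    rw [e, wDbar_const_mul hwDf]; try ring
  have p01 : wDbar (fun w => sinhP lam φ t w 0 1) z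
      = (-Complex.I * lam) * (wDbar t z * ((Real.exp (-φ z / 2) : ℝ) : ℂ)
          + t z * (-(1/2) * ((Real.exp (-φ z / 2) : ℝ) : ℂ) * wDbar f z)) := by
    have e : (fun w => sinhP lam φ t w 0 1)
        = fun w => (-Complex.I * lam)
            * (t w * (fun w => ((Real.exp (-φ w / 2) : ℝ) : ℂ)) w) := by
      funext w; simp [sinhP]; try ring
    rw [e, wDbar_const_mul (htz.fun_mul hEmd), wDbar_mul htz hEmd, vEmbar]
  have p10 : wDbar (fun w => sinhP lam φ t w 1 0) z
      = (1/2) * ((Real.exp (φ z / 2) : ℝ) : ℂ) * wDbar f z := by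
    have e : (fun w => sinhP lam φ t w 1 0)
        = fun w => ((Real.exp (φ w / 2) : ℝ) : ℂ) := by
      funext w; simp [sinhP]
    rw [e, vEbar]
  have p11 : wDbar (fun w => sinhP lam φ t w 1 1) z = (1/4) * wDbar (wD f) z := by
    have e : (fun w => sinhP lam φ t w 1 1) = fun w => (1/4 : ℂ) * wD f w := by
      funext w; simp [sinhP, hfdef]
    rw [e, wDbar_const_mul hwDf]
  have hcomm : wD (wDbar f) z = wDbar (wD f) z := wD_wDbar_comm hf2
  have hl : lam * lam⁻¹ = 1 := mul_inv_cancel₀ hlam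
  have hEE : ((Real.exp (φ z / 2) : ℝ) : ℂ) * ((Real.exp (φ z / 2) : ℝ) : ℂ)
      = ((Real.exp (φ z) : ℝ) : ℂ) := by
    rw [← Complex.ofReal_mul, ← Real.exp_add]; norm_num
  have hEmEm : ((Real.exp (-φ z / 2) : ℝ) : ℂ) * ((Real.exp (-φ z / 2) : ℝ) : ℂ)
      = ((Real.exp (-φ z) : ℝ) : ℂ) := by
    rw [← Complex.ofReal_mul, ← Real.exp_add]; norm_num
  have hI : Complex.I * Complex.I = -1 := Complex.I_mul_I
  ext i j
  fin_cases i <;> fin_cases j <;>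
    simp only [Fin.zero_eta, Fin.mk_one, Fin.isValue, Matrix.sub_apply, Matrix.add_apply,
      Matrix.mul_apply, Fin.sum_univ_two, mwD, mwDbar, Matrix.of_apply]
  · rw [q00, p00, hcomm]
    simp only [sinhP, sinhQ, Matrix.of_apply, Matrix.cons_val', Matrix.cons_val_zero,
      Matrix.cons_val_one, Matrix.head_cons, Matrix.head_fin_const, Matrix.empty_val',
      Matrix.cons_val_fin_one, Fin.isValue]
    linear_combination
      ((-(Complex.I * Complex.I)) * (t z * (starRingEnd ℂ) (t z))
          * (((Real.exp (-φ z / 2) : ℝ) : ℂ) * ((Real.exp (-φ z / 2) : ℝ) : ℂ))) * hl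
        + ((-(t z * (starRingEnd ℂ) (t z)))
          * (((Real.exp (-φ z / 2) : ℝ) : ℂ) * ((Real.exp (-φ z / 2) : ℝ) : ℂ))) * hI
        + (t z * (starRingEnd ℂ) (t z)) * hEmEm + (-1 : ℂ) * hEE
  · rw [q01, p01]
    simp only [sinhP, sinhQ, Matrix.of_apply, Matrix.cons_val', Matrix.cons_val_zero,
      Matrix.cons_val_one, Matrix.head_cons, Matrix.head_fin_const, Matrix.empty_val',
      Matrix.cons_val_fin_one, Fin.isValue]
    ring
  · rw [q10, p10]
    simp only [sinhP, sinhQ, Matrix.of_apply, Matrix.cons_val', Matrix.cons_val_zero,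
      Matrix.cons_val_one, Matrix.head_cons, Matrix.head_fin_const, Matrix.empty_val',
      Matrix.cons_val_fin_one, Fin.isValue]
    ring
  · rw [q11, p11, hcomm]
    simp only [sinhP, sinhQ, Matrix.of_apply, Matrix.cons_val', Matrix.cons_val_zero,
      Matrix.cons_val_one, Matrix.head_cons, Matrix.head_fin_const, Matrix.empty_val',
      Matrix.cons_val_fin_one, Fin.isValue]
    linear_combination
      (((Complex.I * Complex.I)) * (t z * (starRingEnd ℂ) (t z))
          * (((Real.exp (-φ z / 2) : ℝ) : ℂ) * ((Real.exp (-φ z / 2) : ℝ) : ℂ))) * hl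
        + (((t z * (starRingEnd ℂ) (t z)))
          * (((Real.exp (-φ z / 2) : ℝ) : ℂ) * ((Real.exp (-φ z / 2) : ℝ) : ℂ))) * hI
        + (-(t z * (starRingEnd ℂ) (t z))) * hEmEm + (1 : ℂ) * hEE

/-- The zero-curvature equation for the sinh-Gordon connection at a fixed λ ≠ 0 holds on U
iff t is holomorphic on U and φ satisfies the sinh-Gordon equation
(1/2)∂∂̄φ = e^φ − |t|²e^{−φ} on U. -/
theorem sinhGordon_zero_curvature_iff
    (lam : ℂ) (hlam : lam ≠ 0) (U : Set ℂ) (hU : IsOpen U)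
    (φ : ℂ → ℝ) (t : ℂ → ℂ)
    (hφ : ContDiffOn ℝ (⊤ : ℕ∞) φ U) (ht : ContDiffOn ℝ (⊤ : ℕ∞) t U) :
    (∀ z ∈ U,
        mwD (sinhQ lam φ t) z - mwDbar (sinhP lam φ t) z
          + sinhP lam φ t z * sinhQ lam φ t z - sinhQ lam φ t z * sinhP lam φ t z = 0) ↔
    ((∀ z ∈ U, wDbar t z = 0) ∧
      (∀ z ∈ U,
        (1 / 2) * wD (fun w => wDbar (fun v => (φ v : ℂ)) w) z
          = ((Real.exp (φ z) : ℝ) : ℂ)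
            - ((‖t z‖ : ℝ) : ℂ) ^ 2 * ((Real.exp (-φ z) : ℝ) : ℂ))) := by
  have hkey : ∀ z ∈ U,
      mwD (sinhQ lam φ t) z - mwDbar (sinhP lam φ t) z
          + sinhP lam φ t z * sinhQ lam φ t z - sinhQ lam φ t z * sinhP lam φ t z
        = !![(1/2) * wD (wDbar (fun w => (φ w : ℂ))) z
              + t z * (starRingEnd ℂ) (t z) * ((Real.exp (-φ z) : ℝ) : ℂ)
              - ((Real.exp (φ z) : ℝ) : ℂ),
           Complex.I * lam * ((Real.exp (-φ z / 2) : ℝ) : ℂ) * wDbar t z;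
           Complex.I * lam⁻¹ * ((Real.exp (-φ z / 2) : ℝ) : ℂ) * (starRingEnd ℂ) (wDbar t z),
           -((1/2) * wD (wDbar (fun w => (φ w : ℂ))) z
              + t z * (starRingEnd ℂ) (t z) * ((Real.exp (-φ z) : ℝ) : ℂ)
              - ((Real.exp (φ z) : ℝ) : ℂ))] := by
    intro z hz
    exact sinh_key lam hlam φ t z
      ((hφ.contDiffAt (hU.mem_nhds hz)).of_le (WithTop.coe_le_coe.mpr (le_top : (2:ℕ∞) ≤ ⊤)))
      (((ht.contDiffAt (hU.mem_nhds hz))).differentiableAt (by simp))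
  have habs : ∀ z : ℂ, ((‖t z‖ : ℝ) : ℂ) ^ 2 = t z * (starRingEnd ℂ) (t z) := by
    intro z
    rw [← Complex.ofReal_pow, Complex.sq_norm, Complex.mul_conj]
  constructor
  · intro h
    constructor
    · intro z hz
      have h0 := h z hz
      rw [hkey z hz] at h0
      have hB : Complex.I * lam * ((Real.exp (-φ z / 2) : ℝ) : ℂ) * wDbar t z = 0 := by
        have := congrFun (congrFun h0 0) 1
        simpa using this
      have hexp : ((Real.exp (-φ z / 2) : ℝ) : ℂ) ≠ 0 :=
        Complex.ofReal_ne_zero.mpr (Real.exp_ne_zero _)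
      simpa [Complex.I_ne_zero, hlam, hexp, mul_eq_zero] using hB
    · intro z hz
      have h0 := h z hz
      rw [hkey z hz] at h0
      have hA : (1/2) * wD (wDbar (fun w => (φ w : ℂ))) z
          + t z * (starRingEnd ℂ) (t z) * ((Real.exp (-φ z) : ℝ) : ℂ)
          - ((Real.exp (φ z) : ℝ) : ℂ) = 0 := by
        have := congrFun (congrFun h0 0) 0
        simpa using this
      rw [habs z]
      linear_combination hA
  · rintro ⟨h1, h2⟩ z hz
    rw [hkey z hz]
    have hB := h1 z hz
    have hA : (1/2) * wD (wDbar (fun w => (φ w : ℂ))) z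
        + t z * (starRingEnd ℂ) (t z) * ((Real.exp (-φ z) : ℝ) : ℂ)
        - ((Real.exp (φ z) : ℝ) : ℂ) = 0 := by
      have := h2 z hz
      rw [habs z] at this
      linear_combination this
    ext i j
    fin_cases i <;> fin_cases j <;>
      simp only [Fin.zero_eta, Fin.mk_one, Fin.isValue, Matrix.cons_val', Matrix.cons_val_zero,
        Matrix.cons_val_one, Matrix.head_cons, Matrix.head_fin_const, Matrix.empty_val',
        Matrix.cons_val_fin_one, Matrix.of_apply, Matrix.zero_apply]
    · exact hA
    · simp [hB]
    · simp [hB]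
    · simp only [hA, neg_zero]
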